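/- arXiv:math/0604442 — 3 statements merged into one kernel-verified Lean document; each statement's English description precedes it below -/
import Mathlib

section
/- Horizontal composition of cartesian natural transformations over a monad with cartesian multiplication yields a cartesian natural transformation: if p : A → ω and q : B → ω are cartesian natural transformations of endofunctors of a category with pullbacks, ω carries a monad structure whose multiplication μ : ω∘ω → ω is a cartesian natural transformation, and A preserves pullbacks, then the composite natural transformation A∘B → A∘ω → ω∘ω → ω (given by A⋆q, then p⋆ω, then μ) is cartesian. -/
open CategoryTheory CategoryTheory.Limits

/-- A natural transformation between endofunctors is *cartesian* if all of its
naturality squares are pullback squares. -/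
def CartesianNatTrans {C : Type*} [Category C] {F G : C ⥤ C} (p : F ⟶ G) : Prop :=
  ∀ {X Y : C} (f : X ⟶ Y), IsPullback (p.app X) (F.map f) (G.map f) (p.app Y)

/-- Horizontal composition (tensor product) of cartesian natural transformations over a
monad `ω` with cartesian multiplication is cartesian: given cartesian `p : A ⟶ ω` and
`q : B ⟶ ω`, where `A` preserves pullbacks, the composite
`A ∘ B ⟶ A ∘ ω ⟶ ω ∘ ω ⟶ ω` (that is, `A ⋆ q`, then `p ⋆ ω`, then `μ`) is cartesian.
Note that the endofunctor "A ∘ B" (apply `B` first, then `A`) is `B ⋙ A`. -/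
theorem cartesian_tensor {C : Type*} [Category C] [HasPullbacks C]
    {A B : C ⥤ C} (T : Monad C) (p : A ⟶ (T : C ⥤ C)) (q : B ⟶ (T : C ⥤ C))
    (hp : CartesianNatTrans p) (hq : CartesianNatTrans q)
    (hμ : CartesianNatTrans (T.μ : (T : C ⥤ C) ⋙ (T : C ⥤ C) ⟶ (T : C ⥤ C)))
    [PreservesLimitsOfShape WalkingCospan A] :
    CartesianNatTrans
      (Functor.whiskerRight q A ≫ Functor.whiskerLeft (T : C ⥤ C) p ≫ (T.μ : _ ⟶ _) :
        B ⋙ A ⟶ (T : C ⥤ C)) := by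
  intro X Y f
  have s1 : IsPullback (A.map (q.app X)) (A.map (B.map f)) (A.map (T.toFunctor.map f))
      (A.map (q.app Y)) := (hq f).map A
  have s2 := hp (T.toFunctor.map f)
  have s3 := hμ f
  have := s1.paste_horiz (s2.paste_horiz s3)
  simpa using this
end

section
/- Every morphism between trees (finite planar level trees, regarded as ω-graphs) is a monomorphism of ω-graphs. -/
open CategoryTheory CategoryTheory.Limits

/-- An `ω`-graph (globular set): a presheaf on the globe category, presented concretely
as a family of cell sets with source and target maps satisfying the globular identities. -/
structure OmegaGraph : Type 1 where
  cells : ℕ → Type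
  src : ∀ n, cells (n + 1) → cells n
  tgt : ∀ n, cells (n + 1) → cells n
  src_src : ∀ n x, src n (src (n + 1) x) = src n (tgt (n + 1) x)
  tgt_tgt : ∀ n x, tgt n (src (n + 1) x) = tgt n (tgt (n + 1) x)

/-- Morphisms of `ω`-graphs. -/
@[ext]
structure OmegaGraph.Hom (X Y : OmegaGraph) where
  app : ∀ n, X.cells n → Y.cells n
  app_src : ∀ n x, app n (X.src n x) = Y.src n (app (n + 1) x)
  app_tgt : ∀ n x, app n (X.tgt n x) = Y.tgt n (app (n + 1) x)

instance : Category OmegaGraph where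
  Hom := OmegaGraph.Hom
  id X := ⟨fun _ x => x, fun _ _ => rfl, fun _ _ => rfl⟩
  comp f g := ⟨fun n x => g.app n (f.app n x),
    fun n x => by (try dsimp only); rw [f.app_src, g.app_src],
    fun n x => by (try dsimp only); rw [f.app_tgt, g.app_tgt]⟩
  id_comp _ := rfl
  comp_id _ := rfl
  assoc _ _ _ := rfl

/-- The cells of the `N`-globe `n̄`: one pair of parallel cells in every dimension
`k < N` and a single top cell in dimension `N`. -/
inductive GlobeCell (N : ℕ) : ℕ → Type
  | s (k : ℕ) : k < N → GlobeCell N k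
  | t (k : ℕ) : k < N → GlobeCell N k
  | top (k : ℕ) : k = N → GlobeCell N k

/-- The linear tree (globe) `n̄`, i.e. the `ω`-graph represented by `n̄`. -/
def globe (N : ℕ) : OmegaGraph where
  cells k := GlobeCell N k
  src k x := match x with
    | .s _ h => .s k (Nat.lt_of_succ_lt h)
    | .t _ h => .s k (Nat.lt_of_succ_lt h)
    | .top _ h => .s k (h ▸ Nat.lt_succ_self k)
  tgt k x := match x with
    | .s _ h => .t k (Nat.lt_of_succ_lt h)
    | .t _ h => .t k (Nat.lt_of_succ_lt h)
    | .top _ h => .t k (h ▸ Nat.lt_succ_self k)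
  src_src n x := by cases x <;> rfl
  tgt_tgt n x := by cases x <;> rfl

/-- The elementary relations generating the preorder `≤_X` on the cells of an `ω`-graph:
`s*(x) ≤ x` and `x ≤ t*(x)`. -/
def OmegaGraph.CellStep (X : OmegaGraph) : (Σ n, X.cells n) → (Σ n, X.cells n) → Prop :=
  fun a b =>
    (∃ n, ∃ x : X.cells (n + 1), a = ⟨n, X.src n x⟩ ∧ b = ⟨n + 1, x⟩) ∨
    (∃ n, ∃ x : X.cells (n + 1), a = ⟨n + 1, x⟩ ∧ b = ⟨n, X.tgt n x⟩)

/-- The preorder `≤_X` on the cells of an `ω`-graph generated by `s*(x) ≤ x ≤ t*(x)`. -/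
def OmegaGraph.cellLE (X : OmegaGraph) : (Σ n, X.cells n) → (Σ n, X.cells n) → Prop :=
  Relation.ReflTransGen X.CellStep

/-- A (finite planar level) tree: a nonempty `ω`-graph with finitely many cells in total,
whose cell preorder `≤` is a total order. -/
def OmegaGraph.IsTree (X : OmegaGraph) : Prop :=
  Nonempty (Σ n, X.cells n) ∧ Finite (Σ n, X.cells n) ∧
    (∀ a b, X.cellLE a b ∨ X.cellLE b a) ∧
    (∀ a b, X.cellLE a b → X.cellLE b a → a = b)

/-- A tree is linear if it is isomorphic to a globe `n̄`. -/
def OmegaGraph.IsLinear (X : OmegaGraph) : Prop :=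
  ∃ N, Nonempty (X ≅ globe N)

/-- The category `Θ₀` of trees: the full subcategory of `ω`-graphs spanned by trees. -/
abbrev TreeCat := ObjectProperty.FullSubcategory OmegaGraph.IsTree

/-- The action of a morphism on the total set of cells. -/
def OmegaGraph.Hom.sigmaMap {S T : OmegaGraph} (f : OmegaGraph.Hom S T) :
    (Σ n, S.cells n) → (Σ n, T.cells n) :=
  fun a => ⟨a.1, f.app a.1 a.2⟩

lemma cellStep_dim {X : OmegaGraph} {a b : Σ n, X.cells n} (h : X.CellStep a b) :
    a.1 ≠ b.1 := by
  rcases h with ⟨n, x, ha, hb⟩ | ⟨n, x, ha, hb⟩ <;> subst ha <;> subst hb <;> simp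

lemma sigmaMap_step {S T : OmegaGraph} (f : OmegaGraph.Hom S T)
    {a b : Σ n, S.cells n} (h : S.CellStep a b) :
    T.CellStep (f.sigmaMap a) (f.sigmaMap b) := by
  rcases h with ⟨n, x, ha, hb⟩ | ⟨n, x, ha, hb⟩
  · subst ha; subst hb
    exact Or.inl ⟨n, f.app (n + 1) x, by simp [OmegaGraph.Hom.sigmaMap, f.app_src], rfl⟩
  · subst ha; subst hb
    exact Or.inr ⟨n, f.app (n + 1) x, rfl, by simp [OmegaGraph.Hom.sigmaMap, f.app_tgt]⟩

lemma sigmaMap_le {S T : OmegaGraph} (f : OmegaGraph.Hom S T)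
    {a b : Σ n, S.cells n} (h : S.cellLE a b) :
    T.cellLE (f.sigmaMap a) (f.sigmaMap b) := by
  induction h with
  | refl => exact Relation.ReflTransGen.refl
  | tail _ hstep ih => exact ih.tail (sigmaMap_step f hstep)

lemma tree_hom_sigma_injective {S T : OmegaGraph} (hS : S.IsTree) (hT : T.IsTree)
    (f : OmegaGraph.Hom S T) : Function.Injective f.sigmaMap := by
  obtain ⟨-, -, htot, hanti⟩ := hS
  obtain ⟨-, -, -, hanti'⟩ := hT
  have key : ∀ a b : Σ n, S.cells n, S.cellLE a b →
      f.sigmaMap a = f.sigmaMap b → a = b := by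
    intro a b hle heq
    rcases (Relation.ReflTransGen.cases_head hle) with rfl | ⟨c, hac, hcb⟩
    · rfl
    · exfalso
      have h1 : T.cellLE (f.sigmaMap a) (f.sigmaMap c) :=
        Relation.ReflTransGen.single (sigmaMap_step f hac)
      have h2 : T.cellLE (f.sigmaMap c) (f.sigmaMap a) := by
        rw [heq]; exact sigmaMap_le f hcb
      have := hanti' _ _ h1 h2
      exact cellStep_dim (sigmaMap_step f hac) (congrArg Sigma.fst this)
  intro a b heq
  rcases htot a b with h | h
  · exact key a b h heq
  · exact (key b a h heq.symm).symm

/-- Every morphism between trees (finite planar level trees, regarded as `ω`-graphs)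
is a monomorphism of `ω`-graphs. -/
theorem tree_hom_mono (S T : OmegaGraph) (hS : S.IsTree) (hT : T.IsTree)
    (f : S ⟶ T) : Mono f := by
  constructor
  intro Z g h heq
  apply OmegaGraph.Hom.ext
  funext n x
  have h1 : f.app n (g.app n x) = f.app n (h.app n x) :=
    congrArg (fun φ : OmegaGraph.Hom Z T => φ.app n x) heq
  have h2 : f.sigmaMap ⟨n, g.app n x⟩ = f.sigmaMap ⟨n, h.app n x⟩ := by
    simp [OmegaGraph.Hom.sigmaMap, h1]
  have h3 := tree_hom_sigma_injective hS hT f h2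
  injection h3 with _ h4
end

section
/- Let A be an ω-operad and T a tree. The canonical map colim_{S ⊊ T} 𝐀(S) → 𝐀(T), with the colimit taken in the category of 𝐀-algebras over all proper subtrees S of T, is an isomorphism whenever T is not linear. Equivalently, for any Θ_A-model X and any non-linear tree T, the restriction map Hom(Θ_A[T], X) → Hom(∂Θ_A[T], X) is a bijection. -/
open CategoryTheory CategoryTheory.Limits

/-- The iterated source map `X_n → X_k` (for `k ≤ n`) of an `ω`-graph. -/
def OmegaGraph.srcI (X : OmegaGraph) : ∀ (n k : ℕ), k ≤ n → X.cells n → X.cells k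
  | 0, k, h, x => cast (congrArg X.cells (Nat.le_zero.mp h).symm) x
  | n + 1, k, h, x =>
    if h' : k = n + 1 then cast (congrArg X.cells h'.symm) x
    else X.srcI n k (Nat.lt_succ_iff.mp (Nat.lt_of_le_of_ne h h')) (X.src n x)

/-- The iterated target map `X_n → X_k` (for `k ≤ n`) of an `ω`-graph. -/
def OmegaGraph.tgtI (X : OmegaGraph) : ∀ (n k : ℕ), k ≤ n → X.cells n → X.cells k
  | 0, k, h, x => cast (congrArg X.cells (Nat.le_zero.mp h).symm) x
  | n + 1, k, h, x =>
    if h' : k = n + 1 then cast (congrArg X.cells h'.symm) x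
    else X.tgtI n k (Nat.lt_succ_iff.mp (Nat.lt_of_le_of_ne h h')) (X.tgt n x)

theorem OmegaGraph.Hom.app_srcI {X Y : OmegaGraph} (f : X.Hom Y) :
    ∀ (n k : ℕ) (h : k ≤ n) (x : X.cells n),
      f.app k (X.srcI n k h x) = Y.srcI n k h (f.app n x)
  | 0, k, h, x => by
    obtain rfl : k = 0 := Nat.le_zero.mp h
    rfl
  | n + 1, k, h, x => by
    by_cases h' : k = n + 1
    · subst h'
      simp [OmegaGraph.srcI]
    · simp only [OmegaGraph.srcI, dif_neg h']
      rw [f.app_srcI n k _ (X.src n x), f.app_src]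

theorem OmegaGraph.Hom.app_tgtI {X Y : OmegaGraph} (f : X.Hom Y) :
    ∀ (n k : ℕ) (h : k ≤ n) (x : X.cells n),
      f.app k (X.tgtI n k h x) = Y.tgtI n k h (f.app n x)
  | 0, k, h, x => by
    obtain rfl : k = 0 := Nat.le_zero.mp h
    rfl
  | n + 1, k, h, x => by
    by_cases h' : k = n + 1
    · subst h'
      simp [OmegaGraph.tgtI]
    · simp only [OmegaGraph.tgtI, dif_neg h']
      rw [f.app_tgtI n k _ (X.tgt n x), f.app_tgt]

namespace OmegaGraph
variable {X : OmegaGraph}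

theorem srcI_self (n : ℕ) (h : n ≤ n) (x : X.cells n) : X.srcI n n h x = x := by
  cases n with
  | zero => simp [srcI]
  | succ m => simp [srcI]

theorem tgtI_self (n : ℕ) (h : n ≤ n) (x : X.cells n) : X.tgtI n n h x = x := by
  cases n with
  | zero => simp [tgtI]
  | succ m => simp [tgtI]

theorem srcI_of_le (n k : ℕ) (h : k ≤ n) (x : X.cells (n+1)) :
    X.srcI (n+1) k (h.trans (Nat.le_succ n)) x = X.srcI n k h (X.src n x) := by
  have h' : k ≠ n + 1 := by omega
  simp [srcI, h']

theorem tgtI_of_le (n k : ℕ) (h : k ≤ n) (x : X.cells (n+1)) :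
    X.tgtI (n+1) k (h.trans (Nat.le_succ n)) x = X.tgtI n k h (X.tgt n x) := by
  have h' : k ≠ n + 1 := by omega
  simp [tgtI, h']

/-- `srcI n k = src k ∘ srcI n (k+1)` -/
theorem srcI_succ : ∀ (n k : ℕ) (h : k + 1 ≤ n) (h' : k ≤ n) (x : X.cells n),
    X.srcI n k h' x = X.src k (X.srcI n (k+1) h x)
  | 0, k, h, _, x => by omega
  | n + 1, k, h, h', x => by
    rcases eq_or_lt_of_le h with h1 | h1
    · obtain rfl : k = n := by omega
      rw [srcI_of_le k k le_rfl, srcI_self, srcI_self]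
    · have h2 : k + 1 ≤ n := by omega
      rw [srcI_of_le n k (by omega), srcI_of_le n (k+1) h2, srcI_succ n k h2 (by omega)]

theorem tgtI_succ : ∀ (n k : ℕ) (h : k + 1 ≤ n) (h' : k ≤ n) (x : X.cells n),
    X.tgtI n k h' x = X.tgt k (X.tgtI n (k+1) h x)
  | 0, k, h, _, x => by omega
  | n + 1, k, h, h', x => by
    rcases eq_or_lt_of_le h with h1 | h1
    · obtain rfl : k = n := by omega
      rw [tgtI_of_le k k le_rfl, tgtI_self, tgtI_self]
    · have h2 : k + 1 ≤ n := by omega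
      rw [tgtI_of_le n k (by omega), tgtI_of_le n (k+1) h2, tgtI_succ n k h2 (by omega)]

/-- globular-type mixing lemma -/
theorem src_srcI_eq_src_tgtI : ∀ (n k : ℕ) (h : k + 1 ≤ n) (x : X.cells n),
    X.src k (X.srcI n (k+1) h x) = X.src k (X.tgtI n (k+1) h x)
  | 0, k, h, x => by omega
  | n + 1, k, h, x => by
    rcases eq_or_lt_of_le h with h1 | h1
    · obtain rfl : k = n := by omega
      rw [srcI_self, tgtI_self]
    · have h2 : k + 1 ≤ n := by omega
      rw [srcI_of_le n (k+1) h2, tgtI_of_le n (k+1) h2,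
        src_srcI_eq_src_tgtI n k h2 (X.src n x)]
      rcases eq_or_lt_of_le h2 with h3 | h3
      · obtain rfl : k + 1 = n := by omega
        rw [tgtI_self, tgtI_self]
        exact X.src_src k x
      · obtain ⟨p, rfl⟩ : ∃ p, n = p + 1 := ⟨n - 1, by omega⟩
        have h4 : k + 1 ≤ p := by omega
        rw [tgtI_of_le p (k+1) h4, tgtI_of_le p (k+1) h4, X.tgt_tgt p x]

theorem tgt_srcI_eq_tgt_tgtI : ∀ (n k : ℕ) (h : k + 1 ≤ n) (x : X.cells n),
    X.tgt k (X.srcI n (k+1) h x) = X.tgt k (X.tgtI n (k+1) h x)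
  | 0, k, h, x => by omega
  | n + 1, k, h, x => by
    rcases eq_or_lt_of_le h with h1 | h1
    · obtain rfl : k = n := by omega
      rw [srcI_self, tgtI_self]
    · have h2 : k + 1 ≤ n := by omega
      rw [srcI_of_le n (k+1) h2, tgtI_of_le n (k+1) h2]
      rw [← tgt_srcI_eq_tgt_tgtI n k h2 (X.tgt n x)]
      rcases eq_or_lt_of_le h2 with h3 | h3
      · obtain rfl : k + 1 = n := by omega
        rw [srcI_self, srcI_self]
        exact X.tgt_tgt k x
      · obtain ⟨p, rfl⟩ : ∃ p, n = p + 1 := ⟨n - 1, by omega⟩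
        have h4 : k + 1 ≤ p := by omega
        rw [srcI_of_le p (k+1) h4, srcI_of_le p (k+1) h4, X.src_src p x]

theorem srcI_cellLE_aux : ∀ (d n k : ℕ), k + d = n → ∀ (h : k ≤ n) (x : X.cells n),
    X.cellLE ⟨k, X.srcI n k h x⟩ ⟨n, x⟩
  | 0, n, k, hd, h, x => by
    obtain rfl : k = n := by omega
    rw [srcI_self]
    exact Relation.ReflTransGen.refl
  | d + 1, n, k, hd, h, x => by
    have hk : k + 1 ≤ n := by omega
    rw [X.srcI_succ n k hk h]
    exact Relation.ReflTransGen.head (Or.inl ⟨k, X.srcI n (k+1) hk x, rfl, rfl⟩)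
      (srcI_cellLE_aux d n (k+1) (by omega) hk x)

theorem tgtI_cellLE_aux : ∀ (d n k : ℕ), k + d = n → ∀ (h : k ≤ n) (x : X.cells n),
    X.cellLE ⟨n, x⟩ ⟨k, X.tgtI n k h x⟩
  | 0, n, k, hd, h, x => by
    obtain rfl : k = n := by omega
    rw [tgtI_self]
    exact Relation.ReflTransGen.refl
  | d + 1, n, k, hd, h, x => by
    have hk : k + 1 ≤ n := by omega
    rw [X.tgtI_succ n k hk h]
    exact Relation.ReflTransGen.tail (tgtI_cellLE_aux d n (k+1) (by omega) hk x)
      (Or.inr ⟨k, X.tgtI n (k+1) hk x, rfl, rfl⟩)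

theorem srcI_cellLE (n k : ℕ) (h : k ≤ n) (x : X.cells n) :
    X.cellLE ⟨k, X.srcI n k h x⟩ ⟨n, x⟩ :=
  srcI_cellLE_aux (n - k) n k (by omega) h x

theorem tgtI_cellLE (n k : ℕ) (h : k ≤ n) (x : X.cells n) :
    X.cellLE ⟨n, x⟩ ⟨k, X.tgtI n k h x⟩ :=
  tgtI_cellLE_aux (n - k) n k (by omega) h x

theorem srcI_ne_tgtI {T : OmegaGraph} (hT : T.IsTree) {n k : ℕ} (hk : k < n)
    (t : T.cells n) : T.srcI n k hk.le t ≠ T.tgtI n k hk.le t := by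
  intro e
  obtain ⟨-, -, -, anti⟩ := hT
  have h1 : T.cellLE ⟨k, T.srcI n k hk.le t⟩ ⟨n, t⟩ := srcI_cellLE n k hk.le t
  have h2 : T.cellLE ⟨n, t⟩ ⟨k, T.srcI n k hk.le t⟩ := by
    rw [e]; exact tgtI_cellLE n k hk.le t
  have := congrArg Sigma.fst (anti _ _ h1 h2)
  simp at this
  omega

end OmegaGraph


section GlobeLemmas

open OmegaGraph

theorem OmegaGraph.comp_app {X Y Z : OmegaGraph} (f : X ⟶ Y) (g : Y ⟶ Z) (n : ℕ)
    (x : X.cells n) :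
    OmegaGraph.Hom.app (f ≫ g) n x = OmegaGraph.Hom.app g n (OmegaGraph.Hom.app f n x) := rfl

theorem OmegaGraph.id_app {X : OmegaGraph} (n : ℕ) (x : X.cells n) :
    OmegaGraph.Hom.app (𝟙 X) n x = x := rfl

/-- The canonical map `globe n ⟶ W` classifying an `n`-cell `w` of `W`. -/
def fromGlobe (W : OmegaGraph) (n : ℕ) (w : W.cells n) : globe n ⟶ W where
  app k c :=
    match c with
    | .s _ h => W.srcI n k h.le w
    | .t _ h => W.tgtI n k h.le w
    | .top _ h => W.srcI n k h.le w
  app_src k x := by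
    cases x with
    | s h => exact W.srcI_succ n k h.le (by omega) w
    | t h =>
      exact (W.srcI_succ n k h.le (by omega) w).trans
        (W.src_srcI_eq_src_tgtI n k h.le w)
    | top h => exact W.srcI_succ n k h.le (by omega) w
  app_tgt k x := by
    cases x with
    | s h =>
      exact (W.tgtI_succ n k h.le (by omega) w).trans
        (W.tgt_srcI_eq_tgt_tgtI n k h.le w).symm
    | t h => exact W.tgtI_succ n k h.le (by omega) w
    | top h =>
      exact (W.tgtI_succ n k h.le (by omega) w).trans
        (W.tgt_srcI_eq_tgt_tgtI n k h.le w).symm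

@[simp] theorem fromGlobe_app_s (W : OmegaGraph) (n k : ℕ) (w : W.cells n) (h : k < n) :
    OmegaGraph.Hom.app (fromGlobe W n w) k (.s k h) = W.srcI n k h.le w := rfl

@[simp] theorem fromGlobe_app_t (W : OmegaGraph) (n k : ℕ) (w : W.cells n) (h : k < n) :
    OmegaGraph.Hom.app (fromGlobe W n w) k (.t k h) = W.tgtI n k h.le w := rfl

@[simp] theorem fromGlobe_app_top (W : OmegaGraph) (n k : ℕ) (w : W.cells n) (h : k = n) :
    OmegaGraph.Hom.app (fromGlobe W n w) k (.top k h) = W.srcI n k h.le w := rfl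

@[simp] theorem fromGlobe_top (W : OmegaGraph) (n : ℕ) (w : W.cells n) :
    OmegaGraph.Hom.app (fromGlobe W n w) n (.top n rfl) = w := by
  rw [fromGlobe_app_top, OmegaGraph.srcI_self]

theorem fromGlobe_comp {W V : OmegaGraph} (f : W ⟶ V) (n : ℕ) (w : W.cells n) :
    fromGlobe W n w ≫ f = fromGlobe V n (OmegaGraph.Hom.app f n w) := by
  apply OmegaGraph.Hom.ext
  funext k c
  cases c with
  | s h => exact OmegaGraph.Hom.app_srcI f n k h.le w
  | t h => exact OmegaGraph.Hom.app_tgtI f n k h.le w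
  | top h => exact OmegaGraph.Hom.app_srcI f n k h.le w

theorem globe_hom_st {W : OmegaGraph} {N : ℕ} (g : globe N ⟶ W) :
    ∀ (d k : ℕ), k + d = N → ∀ (h : k < N),
      OmegaGraph.Hom.app g k (.s k h) =
        W.srcI N k h.le (OmegaGraph.Hom.app g N (.top N rfl)) ∧
      OmegaGraph.Hom.app g k (.t k h) =
        W.tgtI N k h.le (OmegaGraph.Hom.app g N (.top N rfl)) := by
  intro d
  induction d with
  | zero => intro k hd h; omega
  | succ d ih =>
    intro k hd h
    have hk1 : k + 1 ≤ N := by omega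
    rcases Nat.eq_or_lt_of_le hk1 with he | hl
    · -- k + 1 = N
      obtain rfl : k + 1 = N := he
      constructor
      · have e1 : (OmegaGraph.Hom.app g k ((globe (k+1)).src k (.top (k+1) rfl))) =
            W.src k (OmegaGraph.Hom.app g (k+1) (.top (k+1) rfl)) :=
          (g : OmegaGraph.Hom _ _).app_src k (.top (k+1) rfl)
        rw [W.srcI_succ (k+1) k le_rfl (by omega), W.srcI_self]
        exact e1
      · have e1 : (OmegaGraph.Hom.app g k ((globe (k+1)).tgt k (.top (k+1) rfl))) =
            W.tgt k (OmegaGraph.Hom.app g (k+1) (.top (k+1) rfl)) :=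
          (g : OmegaGraph.Hom _ _).app_tgt k (.top (k+1) rfl)
        rw [W.tgtI_succ (k+1) k le_rfl (by omega), W.tgtI_self]
        exact e1
    · -- k + 1 < N
      obtain ⟨ihs, iht⟩ := ih (k+1) (by omega) hl
      constructor
      · have e1 : (OmegaGraph.Hom.app g k ((globe N).src k (.s (k+1) hl))) =
            W.src k (OmegaGraph.Hom.app g (k+1) (.s (k+1) hl)) :=
          (g : OmegaGraph.Hom _ _).app_src k (.s (k+1) hl)
        rw [W.srcI_succ N k hl.le (by omega)]
        rw [← ihs]
        exact e1
      · have e1 : (OmegaGraph.Hom.app g k ((globe N).tgt k (.t (k+1) hl))) =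
            W.tgt k (OmegaGraph.Hom.app g (k+1) (.t (k+1) hl)) :=
          (g : OmegaGraph.Hom _ _).app_tgt k (.t (k+1) hl)
        rw [W.tgtI_succ N k hl.le (by omega)]
        rw [← iht]
        exact e1

/-- A morphism out of a globe is determined by the image of the top cell. -/
theorem globe_hom_eq {W : OmegaGraph} {N : ℕ} (g : globe N ⟶ W) :
    g = fromGlobe W N (OmegaGraph.Hom.app g N (.top N rfl)) := by
  apply OmegaGraph.Hom.ext
  funext k c
  cases c with
  | s h => exact (globe_hom_st g (N - k) k (by omega) h).1
  | t h => exact (globe_hom_st g (N - k) k (by omega) h).2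
  | top h =>
    cases h
    rw [fromGlobe_app_top, OmegaGraph.srcI_self]

end GlobeLemmas


section GlobeTree

variable {N : ℕ}

theorem GlobeCell.level_le {k : ℕ} (c : GlobeCell N k) : k ≤ N := by
  cases c <;> omega

/-- An encoding of the cells of the globe, for finiteness. -/
def globeCode : (Σ k, (globe N).cells k) → Fin (N + 1) × Fin 3
  | ⟨k, .s _ h⟩ => (⟨k, by omega⟩, 0)
  | ⟨k, .t _ h⟩ => (⟨k, by omega⟩, 1)
  | ⟨k, .top _ h⟩ => (⟨k, by omega⟩, 2)

theorem globeCode_injective : Function.Injective (globeCode (N := N)) := by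
  rintro ⟨k, ca⟩ ⟨l, cb⟩ e
  cases ca <;> cases cb <;>
    simp only [globeCode, Prod.mk.injEq, Fin.mk.injEq] at e <;>
    first
      | (obtain ⟨rfl, -⟩ := e; rfl)
      | (exact absurd e.2 (by decide))

/-- The rank of a globe cell in the linear order. -/
def grank : (Σ k, (globe N).cells k) → ℕ
  | ⟨_, .s k _⟩ => k
  | ⟨_, .t k _⟩ => 2 * N - k
  | ⟨_, .top _ _⟩ => N

theorem grank_step {a b : Σ k, (globe N).cells k} (h : (globe N).CellStep a b) :
    grank a < grank b := by
  rcases h with ⟨m, x, rfl, rfl⟩ | ⟨m, x, rfl, rfl⟩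
  · cases x with
    | s h => show m < m + 1; omega
    | t h => show grank ⟨m, GlobeCell.s m (by omega)⟩ < grank ⟨m+1, GlobeCell.t (m+1) h⟩
             show m < 2 * N - (m + 1); omega
    | top h => show m < N; omega
  · cases x with
    | s h => show m + 1 < 2 * N - m; omega
    | t h => show 2 * N - (m + 1) < 2 * N - m; omega
    | top h => show N < 2 * N - m; omega

theorem grank_le {a b : Σ k, (globe N).cells k} (h : (globe N).cellLE a b) :
    grank a ≤ grank b := by
  induction h with
  | refl => exact le_rfl
  | tail _ hstep ih => exact le_trans ih (le_of_lt (grank_step hstep))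

theorem globe_antisymm {a b : Σ k, (globe N).cells k}
    (h1 : (globe N).cellLE a b) (h2 : (globe N).cellLE b a) : a = b := by
  rcases Relation.ReflTransGen.cases_head h1 with rfl | ⟨c, hs, hc⟩
  · rfl
  · have := grank_step (a := a) (b := c) hs
    have := grank_le hc
    have := grank_le h2
    omega

/-- A canonical cell one dimension above a non-top dimension. -/
def cellAbove (k : ℕ) (h : k < N) : GlobeCell N (k + 1) :=
  if e : k + 1 = N then .top _ e else .s _ (by omega)

theorem s_step (k : ℕ) (h : k < N) (c : GlobeCell N (k + 1)) :
    (globe N).CellStep ⟨k, .s k h⟩ ⟨k + 1, c⟩ :=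
  Or.inl ⟨k, c, by cases c <;> rfl, rfl⟩

theorem t_step (k : ℕ) (h : k < N) (c : GlobeCell N (k + 1)) :
    (globe N).CellStep ⟨k + 1, c⟩ ⟨k, .t k h⟩ :=
  Or.inr ⟨k, c, rfl, by cases c <;> rfl⟩

theorem s_le_self (k : ℕ) (h : k < N) (c : GlobeCell N k) :
    (globe N).cellLE ⟨k, .s k h⟩ ⟨k, c⟩ := by
  cases c with
  | s h' => exact Relation.ReflTransGen.refl
  | t h' =>
    exact Relation.ReflTransGen.head (s_step k h (cellAbove k h))
      (Relation.ReflTransGen.single (t_step k h' (cellAbove k h)))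
  | top h' => omega

theorem t_ge_self (k : ℕ) (h : k < N) (c : GlobeCell N k) :
    (globe N).cellLE ⟨k, c⟩ ⟨k, .t k h⟩ := by
  cases c with
  | t h' => exact Relation.ReflTransGen.refl
  | s h' =>
    exact Relation.ReflTransGen.head (s_step k h' (cellAbove k h))
      (Relation.ReflTransGen.single (t_step k h (cellAbove k h)))
  | top h' => omega

theorem s_le : ∀ (l k : ℕ), k ≤ l → ∀ (h : k < N) (c : GlobeCell N l),
    (globe N).cellLE ⟨k, .s k h⟩ ⟨l, c⟩
  | 0, k, hkl, h, c => by
    obtain rfl : k = 0 := by omega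
    exact s_le_self 0 h c
  | l + 1, k, hkl, h, c => by
    rcases Nat.eq_or_lt_of_le hkl with he | hl
    · obtain rfl : k = l + 1 := he
      exact s_le_self _ h c
    · have hlN : l < N := by cases c <;> omega
      exact Relation.ReflTransGen.tail (s_le l k (by omega) h (.s l hlN))
        (s_step l hlN c)

theorem t_ge : ∀ (l k : ℕ), k ≤ l → ∀ (h : k < N) (c : GlobeCell N l),
    (globe N).cellLE ⟨l, c⟩ ⟨k, .t k h⟩
  | 0, k, hkl, h, c => by
    obtain rfl : k = 0 := by omega
    exact t_ge_self 0 h c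
  | l + 1, k, hkl, h, c => by
    rcases Nat.eq_or_lt_of_le hkl with he | hl
    · obtain rfl : k = l + 1 := he
      exact t_ge_self _ h c
    · have hlN : l < N := by cases c <;> omega
      exact Relation.ReflTransGen.head (t_step l hlN c)
        (t_ge l k (by omega) h (.t l hlN))

theorem globe_total (a b : Σ k, (globe N).cells k) :
    (globe N).cellLE a b ∨ (globe N).cellLE b a := by
  obtain ⟨k, ca⟩ := a
  obtain ⟨l, cb⟩ := b
  cases ca with
  | s hk =>
    cases cb with
    | s hl =>
      rcases le_total k l with hh | hh
      · exact Or.inl (s_le l k hh hk _)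
      · exact Or.inr (s_le k l hh hl _)
    | t hl =>
      rcases le_total k l with hh | hh
      · exact Or.inl (s_le l k hh hk _)
      · exact Or.inl (t_ge k l hh hl _)
    | top hl => exact Or.inl (s_le l k (by omega) hk _)
  | t hk =>
    cases cb with
    | s hl =>
      rcases le_total k l with hh | hh
      · exact Or.inr (t_ge l k hh hk _)
      · exact Or.inr (s_le k l hh hl _)
    | t hl =>
      rcases le_total k l with hh | hh
      · exact Or.inr (t_ge l k hh hk _)
      · exact Or.inl (t_ge k l hh hl _)
    | top hl => exact Or.inr (t_ge l k (by omega) hk _)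
  | top hk =>
    cases cb with
    | s hl => exact Or.inr (s_le k l (by omega) hl _)
    | t hl => exact Or.inl (t_ge k l (by omega) hl _)
    | top hl =>
      cases hk
      cases hl
      exact Or.inl Relation.ReflTransGen.refl

theorem globe_isTree (N : ℕ) : (globe N).IsTree := by
  refine ⟨⟨⟨N, .top N rfl⟩⟩, Finite.of_injective _ globeCode_injective, globe_total,
    fun a b h1 h2 => globe_antisymm h1 h2⟩

end GlobeTree


/-- A strict `ω`-category: an `ω`-graph equipped with compositions `comp` of `n`-cells
along a common `k`-boundary for every `k < n` and identities (units) in all dimensions,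
satisfying strict associativity, unit, interchange and functoriality-of-identities laws,
together with the compatibilities with sources and targets. -/
structure StrictOmegaCategory where
  G : OmegaGraph
  /-- composition of two `n`-cells along their `k`-boundary (`a` followed by `b`) -/
  comp : ∀ {k n : ℕ} (h : k < n) (a b : G.cells n),
    G.tgtI n k h.le a = G.srcI n k h.le b → G.cells n
  /-- the (iterated) identity on a `k`-cell, in dimension `n ≥ k` -/
  unit : ∀ {k n : ℕ}, k ≤ n → G.cells k → G.cells n
  srcI_comp : ∀ {k n : ℕ} (h : k < n) (a b : G.cells n) (hc : _),
    G.srcI n k h.le (comp h a b hc) = G.srcI n k h.le a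
  tgtI_comp : ∀ {k n : ℕ} (h : k < n) (a b : G.cells n) (hc : _),
    G.tgtI n k h.le (comp h a b hc) = G.tgtI n k h.le b
  src_comp_top : ∀ {n : ℕ} (h : n < n + 1) (a b : G.cells (n + 1)) (hc : _),
    G.src n (comp h a b hc) = G.src n a
  tgt_comp_top : ∀ {n : ℕ} (h : n < n + 1) (a b : G.cells (n + 1)) (hc : _),
    G.tgt n (comp h a b hc) = G.tgt n b
  src_comp_lower : ∀ {k n : ℕ} (h : k < n) (h' : k < n + 1) (a b : G.cells (n + 1))
    (hc : _) (hc' : _),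
    G.src n (comp h' a b hc) = comp h (G.src n a) (G.src n b) hc'
  tgt_comp_lower : ∀ {k n : ℕ} (h : k < n) (h' : k < n + 1) (a b : G.cells (n + 1))
    (hc : _) (hc' : _),
    G.tgt n (comp h' a b hc) = comp h (G.tgt n a) (G.tgt n b) hc'
  unit_refl : ∀ {k : ℕ} (x : G.cells k), unit (le_refl k) x = x
  unit_trans : ∀ {k l n : ℕ} (h : k ≤ l) (h' : l ≤ n) (x : G.cells k),
    unit h' (unit h x) = unit (h.trans h') x
  src_unit : ∀ {k n : ℕ} (h : k ≤ n + 1) (hk : k ≤ n) (x : G.cells k),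
    G.src n (unit h x) = unit hk x
  tgt_unit : ∀ {k n : ℕ} (h : k ≤ n + 1) (hk : k ≤ n) (x : G.cells k),
    G.tgt n (unit h x) = unit hk x
  unit_comp : ∀ {k n : ℕ} (h : k < n) (b : G.cells n) (hc : _),
    comp h (unit h.le (G.srcI n k h.le b)) b hc = b
  comp_unit : ∀ {k n : ℕ} (h : k < n) (a : G.cells n) (hc : _),
    comp h a (unit h.le (G.tgtI n k h.le a)) hc = a
  comp_assoc : ∀ {k n : ℕ} (h : k < n) (a b c : G.cells n)
    (hab : _) (hbc : _) (h₁ : _) (h₂ : _),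
    comp h (comp h a b hab) c h₁ = comp h a (comp h b c hbc) h₂
  interchange : ∀ {k l n : ℕ} (hkl : k < l) (hln : l < n) (a b c d : G.cells n)
    (h₁ : _) (h₂ : _) (h₃ : _) (h₄ : _) (h₅ : _) (h₆ : _),
    comp (hkl.trans hln) (comp hln a b h₁) (comp hln c d h₂) h₃ =
      comp hln (comp (hkl.trans hln) a c h₄) (comp (hkl.trans hln) b d h₅) h₆
  unit_comp_functorial : ∀ {k l n : ℕ} (hkl : k < l) (hln : l ≤ n) (a b : G.cells l)
    (hc : _) (hc' : _),
    unit hln (comp hkl a b hc) =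
      comp (Nat.lt_of_lt_of_le hkl hln) (unit hln a) (unit hln b) hc'

/-- Morphisms of strict `ω`-categories: morphisms of the underlying `ω`-graphs
preserving compositions and units. -/
@[ext]
structure StrictOmegaCategory.Hom (C D : StrictOmegaCategory) where
  toHom : C.G ⟶ D.G
  map_comp : ∀ {k n : ℕ} (h : k < n) (a b : C.G.cells n) (hc : _) (hc' : _),
    toHom.app n (C.comp h a b hc) = D.comp h (toHom.app n a) (toHom.app n b) hc'
  map_unit : ∀ {k n : ℕ} (h : k ≤ n) (x : C.G.cells k),
    toHom.app n (C.unit h x) = D.unit h (toHom.app k x)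

instance : Category StrictOmegaCategory where
  Hom := StrictOmegaCategory.Hom
  id C := ⟨𝟙 C.G, fun _ _ _ _ _ => rfl, fun _ _ => rfl⟩
  comp {C D E} f g := ⟨f.toHom ≫ g.toHom,
    fun {k n} h a b hc hc' => by
      have hc₁ : D.G.tgtI n k h.le (f.toHom.app n a) = D.G.srcI n k h.le (f.toHom.app n b) := by
        rw [← f.toHom.app_tgtI, ← f.toHom.app_srcI, hc]
      show g.toHom.app n (f.toHom.app n (C.comp h a b hc)) = _
      rw [f.map_comp h a b hc hc₁, g.map_comp h _ _ hc₁ hc']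
      rfl,
    fun {k n} h x => by
      show g.toHom.app n (f.toHom.app n (C.unit h x)) = _
      rw [f.map_unit, g.map_unit]
      rfl⟩
  id_comp _ := rfl
  comp_id _ := rfl
  assoc _ _ _ := rfl

/-- The forgetful functor from strict `ω`-categories to `ω`-graphs. -/
def strictForget : StrictOmegaCategory ⥤ OmegaGraph where
  obj C := C.G
  map f := f.toHom
  map_id _ := rfl
  map_comp _ _ := rfl

/-- An `ω`-operad over the free strict `ω`-category monad `ω`: a monad `M` on `ω`-graphs
together with a cartesian morphism of monads `p : M ⟶ ω` (an `ω`-collection whose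
structure maps are compatible with the monad structures). -/
structure OmegaOperad (ω : Monad OmegaGraph) where
  M : Monad OmegaGraph
  p : M ⟶ ω
  cart : CartesianNatTrans p.toNatTrans

/-- A morphism of `ω`-operads: a morphism of monads commuting with the projections
to `ω`. -/
structure OperadHom {ω : Monad OmegaGraph} (A B : OmegaOperad ω) where
  f : A.M ⟶ B.M
  w : f ≫ B.p = A.p

open Opposite

/-- The category `Θ_A` associated to an `ω`-operad `A` with monad `M = 𝐀`: the full
subcategory of the Kleisli category of `𝐀` spanned by the free algebras `𝐀(T)` on
trees `T`. -/
abbrev ThetaCat (M : Monad OmegaGraph) :=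
  ObjectProperty.FullSubcategory (fun X : Kleisli M => OmegaGraph.IsTree X.of)

/-- The underlying tree (`ω`-graph) of an object of `Θ_A`. -/
def tg {M : Monad OmegaGraph} (S : ThetaCat M) : OmegaGraph := S.obj.of

/-- The canonical functor `i : Θ₀ ⟶ Θ_A` on morphisms: a map of trees `f : S ⟶ T`
yields the Kleisli morphism `𝐀(f) : 𝐀(S) ⟶ 𝐀(T)`. -/
def iHom {M : Monad OmegaGraph} {S T : ThetaCat M} (f : tg S ⟶ tg T) : S ⟶ T :=
  ⟨⟨show tg S ⟶ M.obj (tg T) from f ≫ M.η.app (tg T)⟩⟩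

/-- An `A`-cellular set: a presheaf of sets on `Θ_A`. -/
abbrev CellularSet (M : Monad OmegaGraph) : Type _ := (ThetaCat M)ᵒᵖ ⥤ Type

/-- The nerve of an `𝐀`-algebra `C`: the `A`-cellular set
`𝐀(T) ↦ Hom_{Alg}(𝐀(T), C) ≅ Hom_{ωGraph}(T, C)`, with functoriality induced by the
algebra structure of `C`. -/
def operadNerve (M : Monad OmegaGraph) (C : M.Algebra) : CellularSet M where
  obj S := (tg S.unop ⟶ C.A)
  map {S S'} φ := TypeCat.ofHom fun u =>
    (show tg S'.unop ⟶ M.obj (tg S.unop) from φ.unop.hom.of) ≫ M.map u ≫ C.a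
  map_id S := by
    ext u
    show M.η.app (tg S.unop) ≫ M.map u ≫ C.a = u
    rw [← M.η.naturality_assoc u, C.unit]
    simp
  map_comp {S S' S''} φ ψ := by
    ext u
    show ((show tg S''.unop ⟶ M.obj (tg S'.unop) from ψ.unop.hom.of) ≫
        M.map (show tg S'.unop ⟶ M.obj (tg S.unop) from φ.unop.hom.of) ≫
          M.μ.app (tg S.unop)) ≫ M.map u ≫ C.a =
      (show tg S''.unop ⟶ M.obj (tg S'.unop) from ψ.unop.hom.of) ≫
        M.map ((show tg S'.unop ⟶ M.obj (tg S.unop) from φ.unop.hom.of) ≫ M.map u ≫ C.a) ≫ C.a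
    generalize (show tg S''.unop ⟶ M.obj (tg S'.unop) from ψ.unop.hom.of) = b
    generalize (show tg S'.unop ⟶ M.obj (tg S.unop) from φ.unop.hom.of) = a
    simp only [Functor.map_comp, Category.assoc]
    rw [← C.assoc, ← M.μ.naturality_assoc u]
    rfl

theorem iHom_comp {M : Monad OmegaGraph} {S S' S'' : ThetaCat M}
    (g : tg S ⟶ tg S') (f : tg S' ⟶ tg S'') :
    iHom (g ≫ f) = iHom g ≫ iHom f := by
  apply InducedCategory.hom_ext; apply Kleisli.hom_ext
  show (g ≫ f) ≫ M.η.app (tg S'') =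
    (show tg S ⟶ M.obj (tg S') from g ≫ M.η.app (tg S')) ≫
      M.map (show tg S' ⟶ M.obj (tg S'') from f ≫ M.η.app (tg S'')) ≫ M.μ.app (tg S'')
  simp only [Functor.map_comp, Category.assoc]
  rw [Monad.right_unit]
  have := M.η.naturality f
  simp only [Functor.id_map] at this
  simp [← this]

/-- Compatible families on an `A`-cellular set `X` indexed by the maps from linear trees
(globes) into a tree `T`; this is the limit `lim_{n̄ → T} Hom(Θ_A[n̄], X)` appearing in
the Segal-type nerve criterion. -/
def LinearFamily {M : Monad OmegaGraph} (X : CellularSet M) (T : ThetaCat M) : Type 1 :=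
  { u : ∀ (L : ThetaCat M), (tg L).IsLinear → (tg L ⟶ tg T) → X.obj (op L) //
    ∀ (L L' : ThetaCat M) (hL : (tg L).IsLinear) (hL' : (tg L').IsLinear)
      (g : tg L ⟶ tg L') (f : tg L' ⟶ tg T),
      u L hL (g ≫ f) = X.map (iHom g).op (u L' hL' f) }

/-- The canonical map `Hom(Θ_A[T], X) ⟶ lim_{n̄ → T} Hom(Θ_A[n̄], X)` from `X(𝐀(T))`
to the compatible families indexed by the maps of linear trees into `T`. -/
def linearRestriction {M : Monad OmegaGraph} (X : CellularSet M) (T : ThetaCat M) :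
    X.obj (op T) → LinearFamily X T := fun x =>
  ⟨fun _L _hL f => X.map (iHom f).op x, fun L L' _ _ g f => by
    dsimp only
    rw [← FunctorToTypes.map_comp_apply, ← op_comp, iHom_comp]⟩

/-- The Segal-type condition: an `A`-cellular set `X` satisfies it precisely when, for
every tree `T`, the canonical map
`Hom(Θ_A[T], X) ⟶ lim_{n̄ → T} Hom(Θ_A[n̄], X)` is a bijection. -/
def SegalCondition {M : Monad OmegaGraph} (X : CellularSet M) : Prop :=
  ∀ T : ThetaCat M, Function.Bijective (linearRestriction X T)

/-- The category of proper subtrees of a tree `T`: subobjects `S ⊊ T` in the category of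
`ω`-graphs which are trees, with inclusions strictly smaller than the identity. -/
structure ProperSubtree (T : OmegaGraph) : Type 1 where
  S : OmegaGraph
  tree : S.IsTree
  incl : S ⟶ T
  mono : Mono incl
  proper : ¬IsIso incl

instance (T : OmegaGraph) : Category (ProperSubtree T) where
  Hom a b := { g : a.S ⟶ b.S // g ≫ b.incl = a.incl }
  id a := ⟨𝟙 _, Category.id_comp _⟩
  comp g h := ⟨g.1 ≫ h.1, by rw [Category.assoc, h.2, g.2]⟩
  id_comp _ := Subtype.ext (Category.id_comp _)
  comp_id _ := Subtype.ext (Category.comp_id _)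
  assoc _ _ _ := Subtype.ext (Category.assoc _ _ _)

/-- The diagram `S ↦ 𝐀(S)` of free `𝐀`-algebras on the proper subtrees of `T`. -/
@[simps]
def subtreeDiagram (M : Monad OmegaGraph) (T : OmegaGraph) :
    ProperSubtree T ⥤ M.Algebra where
  obj a := M.free.obj a.S
  map g := M.free.map g.1
  map_id _ := M.free.map_id _
  map_comp _ _ := M.free.map_comp _ _

/-- The canonical cocone on the diagram of free algebras on proper subtrees of `T`,
with apex the free algebra `𝐀(T)`. -/
@[simps]
def subtreeCocone (M : Monad OmegaGraph) (T : OmegaGraph) :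
    Limits.Cocone (subtreeDiagram M T) where
  pt := M.free.obj T
  ι := { app := fun a => M.free.map a.incl
         naturality := fun a b g => by
           dsimp
           show M.free.map g.1 ≫ M.free.map b.incl = M.free.map a.incl ≫ 𝟙 _
           rw [← M.free.map_comp, g.2, Category.comp_id] }

/-- Surjectivity (on cells) of a map of `ω`-graphs; a map of trees `S ⟶ T` has proper
image exactly when it is not surjective. -/
def OmegaGraph.HomSurj {X Y : OmegaGraph} (f : X ⟶ Y) : Prop :=
  ∀ (n : ℕ) (y : Y.cells n), ∃ x, f.app n x = y

/-- Compatible families on an `A`-cellular set `X` indexed by the maps of trees into `T`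
with proper image; this computes `Hom(∂Θ_A[T], X)`. -/
def BoundaryFamily {M : Monad OmegaGraph} (X : CellularSet M) (T : ThetaCat M) : Type 1 :=
  { u : ∀ (L : ThetaCat M) (f : tg L ⟶ tg T), ¬OmegaGraph.HomSurj f → X.obj (Opposite.op L) //
    ∀ (L L' : ThetaCat M) (g : tg L ⟶ tg L') (f : tg L' ⟶ tg T)
      (hf : ¬OmegaGraph.HomSurj f) (hgf : ¬OmegaGraph.HomSurj (g ≫ f)),
      u L (g ≫ f) hgf = X.map (iHom g).op (u L' f hf) }

/-- The canonical restriction map `Hom(Θ_A[T], X) ⟶ Hom(∂Θ_A[T], X)`. -/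
def boundaryRestriction {M : Monad OmegaGraph} (X : CellularSet M) (T : ThetaCat M) :
    X.obj (Opposite.op T) → BoundaryFamily X T := fun x =>
  ⟨fun _L f _hf => X.map (iHom f).op x, fun L L' g f _ _ => by
    dsimp only
    rw [← FunctorToTypes.map_comp_apply, ← op_comp, iHom_comp]⟩

section IsoLemmas

theorem fromGlobe_injective {T : OmegaGraph} (hT : T.IsTree) {n : ℕ} (t : T.cells n)
    (k : ℕ) : Function.Injective (OmegaGraph.Hom.app (fromGlobe T n t) k) := by
  intro a b e
  cases a with
  | s h =>
    cases b with
    | s h' => rfl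
    | t h' => exact absurd e (OmegaGraph.srcI_ne_tgtI hT h t)
    | top h' => omega
  | t h =>
    cases b with
    | s h' => exact absurd e.symm (OmegaGraph.srcI_ne_tgtI hT h t)
    | t h' => rfl
    | top h' => omega
  | top h =>
    cases b with
    | s h' => omega
    | t h' => omega
    | top h' => rfl

theorem fromGlobe_mono {T : OmegaGraph} (hT : T.IsTree) {n : ℕ} (t : T.cells n) :
    CategoryTheory.Mono (fromGlobe T n t) := by
  constructor
  intro Z f g e
  apply OmegaGraph.Hom.ext
  funext k x
  exact fromGlobe_injective hT t k
    (congrFun (congrFun (congrArg OmegaGraph.Hom.app e) k) x)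

theorem omegaGraph_isIso_of_bijective {X Y : OmegaGraph} (f : X ⟶ Y)
    (hb : ∀ n, Function.Bijective (OmegaGraph.Hom.app f n)) : CategoryTheory.IsIso f := by
  let e : ∀ n, X.cells n ≃ Y.cells n := fun n => Equiv.ofBijective _ (hb n)
  have he : ∀ n x, (e n) x = OmegaGraph.Hom.app f n x := fun _ _ => rfl
  refine ⟨⟨⟨fun n y => (e n).symm y, ?_, ?_⟩, ?_, ?_⟩⟩
  · intro n y
    apply (e n).injective
    rw [Equiv.apply_symm_apply, he, (f : OmegaGraph.Hom X Y).app_src,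
      ← he (n+1), Equiv.apply_symm_apply]
  · intro n y
    apply (e n).injective
    rw [Equiv.apply_symm_apply, he, (f : OmegaGraph.Hom X Y).app_tgt,
      ← he (n+1), Equiv.apply_symm_apply]
  · apply OmegaGraph.Hom.ext
    funext n x
    exact (e n).symm_apply_apply x
  · apply OmegaGraph.Hom.ext
    funext n y
    exact (e n).apply_symm_apply y

theorem omegaGraph_surj_of_isIso {X Y : OmegaGraph} (f : X ⟶ Y)
    (h : CategoryTheory.IsIso f) : OmegaGraph.HomSurj f := by
  intro n y
  refine ⟨OmegaGraph.Hom.app (CategoryTheory.inv f) n y, ?_⟩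
  have := CategoryTheory.IsIso.inv_hom_id f
  exact congrFun (congrFun (congrArg OmegaGraph.Hom.app this) n) y

theorem fromGlobe_not_surj {T : OmegaGraph} (hT : T.IsTree) (hnl : ¬T.IsLinear)
    {n : ℕ} (t : T.cells n) : ¬OmegaGraph.HomSurj (fromGlobe T n t) := by
  intro hs
  apply hnl
  have : CategoryTheory.IsIso (fromGlobe T n t) :=
    omegaGraph_isIso_of_bijective _ (fun k => ⟨fromGlobe_injective hT t k, hs k⟩)
  exact ⟨n, ⟨(CategoryTheory.asIso (fromGlobe T n t)).symm⟩⟩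

theorem fromGlobe_not_iso {T : OmegaGraph} (hT : T.IsTree) (hnl : ¬T.IsLinear)
    {n : ℕ} (t : T.cells n) : ¬CategoryTheory.IsIso (fromGlobe T n t) := fun h =>
  fromGlobe_not_surj hT hnl t (omegaGraph_surj_of_isIso _ h)

theorem linear_hom_not_surj {T : OmegaGraph} (hT : T.IsTree) (hnl : ¬T.IsLinear)
    {L : OmegaGraph} (hL : L.IsLinear) (f : L ⟶ T) : ¬OmegaGraph.HomSurj f := by
  intro hs
  obtain ⟨N, ⟨e⟩⟩ := hL
  have hg : OmegaGraph.HomSurj (e.inv ≫ f) := by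
    intro n y
    obtain ⟨x, hx⟩ := hs n y
    refine ⟨OmegaGraph.Hom.app e.hom n x, ?_⟩
    rw [OmegaGraph.comp_app]
    have : OmegaGraph.Hom.app e.inv n (OmegaGraph.Hom.app e.hom n x) = x :=
      congrFun (congrFun (congrArg OmegaGraph.Hom.app e.hom_inv_id) n) x
    rw [this, hx]
  apply fromGlobe_not_surj hT hnl
    (OmegaGraph.Hom.app (e.inv ≫ f) N (.top N rfl))
  rw [← globe_hom_eq (e.inv ≫ f)]
  exact hg

theorem homSurj_comp_left {L L' T : OmegaGraph} (g : L ⟶ L') (f : L' ⟶ T)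
    (h : OmegaGraph.HomSurj (g ≫ f)) : OmegaGraph.HomSurj f := fun n y => by
  obtain ⟨x, hx⟩ := h n y
  exact ⟨OmegaGraph.Hom.app g n x, hx⟩

end IsoLemmas


section Colimit

open CategoryTheory

variable {M : Monad OmegaGraph} {T : OmegaGraph}

/-- The proper subtree generated by a cell of a non-linear tree: the image of the
corresponding globe. -/
def genSubtree (hT : T.IsTree) (hnl : ¬T.IsLinear) {n : ℕ} (t : T.cells n) :
    ProperSubtree T where
  S := globe n
  tree := globe_isTree n
  incl := fromGlobe T n t
  mono := fromGlobe_mono hT t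
  proper := fromGlobe_not_iso hT hnl t

/-- The comparison map from a proper subtree to the algebra underlying the apex of a
cocone. -/
def vmap (c : Limits.Cocone (subtreeDiagram M T)) (a : ProperSubtree T) : a.S ⟶ c.pt.A :=
  M.η.app a.S ≫ (c.ι.app a).f

theorem vmap_nat (c : Limits.Cocone (subtreeDiagram M T)) {a b : ProperSubtree T}
    (g : a ⟶ b) : g.1 ≫ vmap c b = vmap c a := by
  have h1 := c.w g
  have h2 : M.map g.1 ≫ (c.ι.app b).f = (c.ι.app a).f := by
    have := congrArg Monad.Algebra.Hom.f h1
    rw [Monad.Algebra.comp_f] at this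
    exact this
  show g.1 ≫ M.η.app b.S ≫ (c.ι.app b).f = M.η.app a.S ≫ (c.ι.app a).f
  rw [← h2]
  have h3 : g.1 ≫ M.η.app b.S = M.η.app a.S ≫ M.map g.1 := by
    simpa using (M.η.naturality g.1)
  erw [← Category.assoc, h3, Category.assoc]

variable (hT : T.IsTree) (hnl : ¬T.IsLinear)

/-- The descent morphism on underlying `ω`-graphs. -/
def uHom (c : Limits.Cocone (subtreeDiagram M T)) : T ⟶ c.pt.A where
  app n t := OmegaGraph.Hom.app (vmap c (genSubtree hT hnl t)) n (.top n rfl)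
  app_src n x := by
    (try dsimp only)
    -- morphism of proper subtrees from gen (src x) to gen x
    have hψ : fromGlobe (globe (n+1)) n (.s n (Nat.lt_succ_self n)) ≫
        fromGlobe T (n+1) x = fromGlobe T n (T.src n x) := by
      erw [fromGlobe_comp]
      congr 1
      show T.srcI (n+1) n (Nat.le_succ n) x = T.src n x
      rw [T.srcI_of_le n n le_rfl x, T.srcI_self]
    let φ : genSubtree hT hnl (T.src n x) ⟶ genSubtree hT hnl x :=
      ⟨fromGlobe (globe (n+1)) n (.s n (Nat.lt_succ_self n)), hψ⟩
    have h3 := vmap_nat c φ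
    have h4 := congrFun (congrFun (congrArg OmegaGraph.Hom.app h3) n) (.top n rfl)
    erw [OmegaGraph.comp_app] at h4
    have h5 : OmegaGraph.Hom.app (fromGlobe (globe (n+1)) n (.s n (Nat.lt_succ_self n)))
        n (.top n rfl) = GlobeCell.s n (Nat.lt_succ_self n) := by
      erw [fromGlobe_app_top, OmegaGraph.srcI_self]
    rw [h5] at h4
    rw [← h4]
    -- now use that vmap (gen x) is a graph morphism
    have h6 := (vmap c (genSubtree hT hnl x) : OmegaGraph.Hom _ _).app_src n
      (.top (n+1) rfl)
    exact h6
  app_tgt n x := by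
    (try dsimp only)
    have hψ : fromGlobe (globe (n+1)) n (.t n (Nat.lt_succ_self n)) ≫
        fromGlobe T (n+1) x = fromGlobe T n (T.tgt n x) := by
      erw [fromGlobe_comp]
      congr 1
      show T.tgtI (n+1) n (Nat.le_succ n) x = T.tgt n x
      rw [T.tgtI_of_le n n le_rfl x, T.tgtI_self]
    let φ : genSubtree hT hnl (T.tgt n x) ⟶ genSubtree hT hnl x :=
      ⟨fromGlobe (globe (n+1)) n (.t n (Nat.lt_succ_self n)), hψ⟩
    have h3 := vmap_nat c φ
    have h4 := congrFun (congrFun (congrArg OmegaGraph.Hom.app h3) n) (.top n rfl)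
    erw [OmegaGraph.comp_app] at h4
    have h5 : OmegaGraph.Hom.app (fromGlobe (globe (n+1)) n (.t n (Nat.lt_succ_self n)))
        n (.top n rfl) = GlobeCell.t n (Nat.lt_succ_self n) := by
      erw [fromGlobe_app_top, OmegaGraph.srcI_self]
    rw [h5] at h4
    rw [← h4]
    have h6 := (vmap c (genSubtree hT hnl x) : OmegaGraph.Hom _ _).app_tgt n
      (.top (n+1) rfl)
    exact h6

theorem incl_uHom (c : Limits.Cocone (subtreeDiagram M T)) (a : ProperSubtree T) :
    a.incl ≫ uHom hT hnl c = vmap c a := by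
  apply OmegaGraph.Hom.ext
  funext n s
  have hχ : fromGlobe a.S n s ≫ a.incl =
      fromGlobe T n (OmegaGraph.Hom.app a.incl n s) := fromGlobe_comp a.incl n s
  let χ : genSubtree hT hnl (OmegaGraph.Hom.app a.incl n s) ⟶ a :=
    ⟨fromGlobe a.S n s, hχ⟩
  have h3 := vmap_nat c χ
  have h4 := congrFun (congrFun (congrArg OmegaGraph.Hom.app h3) n) (.top n rfl)
  erw [OmegaGraph.comp_app] at h4
  have h5 : OmegaGraph.Hom.app (fromGlobe a.S n s) n (.top n rfl) = s := fromGlobe_top _ _ _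
  rw [h5] at h4
  exact h4.symm

theorem homEquiv_eq_vmap (c : Limits.Cocone (subtreeDiagram M T)) (a : ProperSubtree T) :
    (M.adj.homEquiv a.S c.pt) (c.ι.app a) = vmap c a := by
  erw [Adjunction.homEquiv_unit]
  rfl

/-- The colimit property: `𝐀(T)` is the colimit of the free algebras on the proper
subtrees of a non-linear tree `T`. -/
def subtreeCoconeIsColimit : Limits.IsColimit (subtreeCocone M T) where
  desc c := (M.adj.homEquiv T c.pt).symm (uHom hT hnl c)
  fac c a := by
    apply (M.adj.homEquiv a.S c.pt).injective
    show (M.adj.homEquiv a.S c.pt) (M.free.map a.incl ≫ _) = _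
    rw [Adjunction.homEquiv_naturality_left]
    erw [Equiv.apply_symm_apply]
    rw [homEquiv_eq_vmap]
    exact incl_uHom hT hnl c a
  uniq c m hm := by
    apply Equiv.injective (M.adj.homEquiv T c.pt)
    erw [Equiv.apply_symm_apply]
    apply OmegaGraph.Hom.ext
    funext n t
    have h1 := hm (genSubtree hT hnl t)
    have h2 := congrArg (M.adj.homEquiv (globe n) c.pt) h1
    rw [show (subtreeCocone M T).ι.app (genSubtree hT hnl t) =
        M.free.map (fromGlobe T n t) from rfl] at h2
    erw [Adjunction.homEquiv_naturality_left] at h2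
    have h2' : fromGlobe T n t ≫ (M.adj.homEquiv T c.pt) m =
        vmap c (genSubtree hT hnl t) :=
      h2.trans (homEquiv_eq_vmap c (genSubtree hT hnl t))
    have h4 := congrFun (congrFun (congrArg OmegaGraph.Hom.app h2') n) (.top n rfl)
    erw [OmegaGraph.comp_app, fromGlobe_top] at h4
    exact h4

end Colimit


section Boundary

open CategoryTheory Opposite

variable {M : Monad OmegaGraph}

/-- Restriction of a boundary family to a linear family, for a non-linear tree. -/
def linFam (X : CellularSet M) {T : OmegaGraph} (hT : T.IsTree) (hnl : ¬T.IsLinear)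
    (u : BoundaryFamily X ⟨Kleisli.mk M T, hT⟩) : LinearFamily X ⟨Kleisli.mk M T, hT⟩ :=
  ⟨fun L hL f => u.1 L f (linear_hom_not_surj hT hnl hL f),
   fun L L' hL hL' g f =>
     u.2 L L' g f (linear_hom_not_surj hT hnl hL' f)
       (linear_hom_not_surj hT hnl hL (g ≫ f))⟩

theorem linFam_injective (X : CellularSet M) (hX : SegalCondition X) {T : OmegaGraph}
    (hT : T.IsTree) (hnl : ¬T.IsLinear) : Function.Injective (linFam X hT hnl) := by
  intro u u' e
  apply Subtype.ext
  funext L f hf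
  apply (hX L).injective
  apply Subtype.ext
  funext L0 hL0 g
  show X.map (iHom g).op (u.1 L f hf) = X.map (iHom g).op (u'.1 L f hf)
  have hgf : ¬OmegaGraph.HomSurj (g ≫ f) := fun hs => hf (homSurj_comp_left g f hs)
  rw [← u.2 L0 L g f hf hgf, ← u'.2 L0 L g f hf hgf]
  exact congrFun (congrFun (congrFun (congrArg Subtype.val e) L0) hL0) (g ≫ f)

theorem boundary_bijective (X : CellularSet M) (hX : SegalCondition X) {T : OmegaGraph}
    (hT : T.IsTree) (hnl : ¬T.IsLinear) :
    Function.Bijective (boundaryRestriction X ⟨Kleisli.mk M T, hT⟩) := by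
  have hinj := linFam_injective X hX hT hnl
  have hcomm : ∀ x, linFam X hT hnl (boundaryRestriction X ⟨Kleisli.mk M T, hT⟩ x) =
      linearRestriction X ⟨Kleisli.mk M T, hT⟩ x := fun _ => rfl
  constructor
  · intro a b e
    apply (hX ⟨Kleisli.mk M T, hT⟩).injective
    rw [← hcomm a, ← hcomm b, e]
  · intro u
    obtain ⟨x, hx⟩ := (hX ⟨Kleisli.mk M T, hT⟩).surjective (linFam X hT hnl u)
    exact ⟨x, hinj ((hcomm x).trans hx)⟩

end Boundary


/-- Let `A` be an `ω`-operad (over the free strict `ω`-category monad `ω = UF`) and `T`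
a non-linear tree.  Then the canonical map `colim_{S ⊊ T} 𝐀(S) ⟶ 𝐀(T)`, with the
colimit taken in `𝐀`-algebras over the proper subtrees of `T`, is an isomorphism;
equivalently, for any `Θ_A`-model `X` (an `A`-cellular set satisfying the Segal/sheaf
condition) the restriction map `Hom(Θ_A[T], X) ⟶ Hom(∂Θ_A[T], X)` is a bijection. -/
theorem boundary_of_nonlinear_tree
    (F : OmegaGraph ⥤ StrictOmegaCategory) (adj : F ⊣ strictForget)
    (A : OmegaOperad adj.toMonad) (T : OmegaGraph) (hT : T.IsTree)
    (hnl : ¬T.IsLinear) :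
    Nonempty (Limits.IsColimit (subtreeCocone A.M T)) ∧
      (∀ X : CellularSet A.M, SegalCondition X →
        Function.Bijective (boundaryRestriction X ⟨Kleisli.mk A.M T, hT⟩)) :=
  ⟨⟨subtreeCoconeIsColimit hT hnl⟩, fun X hX => boundary_bijective X hX hT hnl⟩
end
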